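/- Let A and B be n×n generalized tournament matrices with the same principal minors of orders 2 and 3. Then every connected component of the equality graph E(A,B) is a clan of both A and B, and every connected component of the difference graph D(A,B) is a clan of both A and B. -/

import Mathlib

/-!
The order-2 minors force every off-diagonal entry of `B` to be either the corresponding entry
of `A` or its complement. An order-3 principal minor of a generalized tournament matrix is the
sum of the two cyclic products of its triangle. If `{i, j}` is an edge of `E(A,B)` and `k` lies
outside its component, then `b_ik = 1 - a_ik` and `b_jk = 1 - a_jk`, and the two cyclic sums
differ by `(1 - 2 a_ij) (a_ik - a_jk)`; hence `a_ik` is constant along the component. The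
difference graph `D(A,B)` is the equality graph `E(A,Bᵀ)`, and `Bᵀ` is again a generalized
tournament matrix with the same principal minors and the same clans as `B`.
-/

def IsGTM {n : ℕ} (M : Matrix (Fin n) (Fin n) ℝ) : Prop :=
  (∀ i j, 0 ≤ M i j) ∧ M + M.transpose = (Matrix.of fun _ _ => (1 : ℝ)) - 1

def IsClan {m : Type*} (M : Matrix m m ℝ) (X : Set m) : Prop :=
  ∀ i ∈ X, ∀ j ∈ X, ∀ k ∉ X, M i k = M j k ∧ M k i = M k j

def SameMinors {n : ℕ} (A B : Matrix (Fin n) (Fin n) ℝ) (P : ℕ → Prop) : Prop :=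
  ∀ S : Finset (Fin n), P S.card →
    (A.submatrix (fun i : ↥S => (i : Fin n)) (fun i : ↥S => (i : Fin n))).det =
      (B.submatrix (fun i : ↥S => (i : Fin n)) (fun i : ↥S => (i : Fin n))).det

/-- Adjacency relation of the equality graph `E(A,B)`. -/
def EAdj {n : ℕ} (A B : Matrix (Fin n) (Fin n) ℝ) (i j : Fin n) : Prop :=
  i ≠ j ∧ A i j = B i j ∧ A i j ≠ 1 / 2

/-- Adjacency relation of the difference graph `D(A,B)`. -/
def DAdj {n : ℕ} (A B : Matrix (Fin n) (Fin n) ℝ) (i j : Fin n) : Prop :=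
  i ≠ j ∧ A i j = 1 - B i j ∧ A i j ≠ 1 / 2

open Function Relation

namespace Matrix

variable {ι R : Type*} [DecidableEq ι] [CommRing R]

theorem det_submatrix_finset_eq_of_range {m : ℕ} (M : Matrix ι ι R) (S : Finset ι)
    (f : Fin m → ι) (hf : Injective f) (hS : (S : Set ι) = Set.range f) :
    (M.submatrix ((↑) : S → ι) (↑)).det = (M.submatrix f f).det := by
  have hbij : Bijective fun a => (⟨f a, by simp [← Finset.mem_coe, hS]⟩ : S) := by
    refine ⟨fun a b h => hf (congrArg Subtype.val h), fun x => ?_⟩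
    obtain ⟨a, ha⟩ : (x : ι) ∈ Set.range f := hS ▸ x.2
    exact ⟨a, Subtype.ext ha⟩
  rw [← det_submatrix_equiv_self (Equiv.ofBijective _ hbij), submatrix_submatrix]
  rfl

theorem det_submatrix_pair (M : Matrix ι ι R) {i j : ι} (hij : i ≠ j) :
    (M.submatrix ((↑) : ({i, j} : Finset ι) → ι) (↑)).det =
      (M.submatrix ![i, j] ![i, j]).det :=
  det_submatrix_finset_eq_of_range M _ ![i, j] (by simp [hij]) <| by
    simp only [Finset.coe_insert, Finset.coe_singleton, range_cons, range_empty,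
      Set.union_empty, Set.singleton_union]

theorem det_submatrix_triple (M : Matrix ι ι R) {i j k : ι} (hij : i ≠ j) (hik : i ≠ k)
    (hjk : j ≠ k) :
    (M.submatrix ((↑) : ({i, j, k} : Finset ι) → ι) (↑)).det =
      (M.submatrix ![i, j, k] ![i, j, k]).det :=
  det_submatrix_finset_eq_of_range M _ ![i, j, k]
    (Fin.cons_injective_of_injective (by simp [hij, hik]) (by simp [hjk])) <| by
    simp only [Finset.coe_insert, Finset.coe_singleton, range_cons, range_empty,
      Set.union_empty, Set.singleton_union]

end Matrix

theorem isClan_transpose_iff {m : Type*} {M : Matrix m m ℝ} {X : Set m} :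
    IsClan M.transpose X ↔ IsClan M X :=
  forall₂_congr fun _ _ => forall₂_congr fun _ _ => forall₂_congr fun _ _ => and_comm

namespace IsGTM

variable {n : ℕ} {M : Matrix (Fin n) (Fin n) ℝ}

theorem apply_self (hM : IsGTM M) (i : Fin n) : M i i = 0 := by
  have h := congrFun₂ hM.2 i i
  simp only [Matrix.add_apply, Matrix.transpose_apply, Matrix.sub_apply, Matrix.of_apply,
    Matrix.one_apply_eq] at h
  linarith

theorem apply_swap (hM : IsGTM M) {i j : Fin n} (hij : i ≠ j) : M j i = 1 - M i j := by
  have h := congrFun₂ hM.2 i j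
  simp only [Matrix.add_apply, Matrix.transpose_apply, Matrix.sub_apply, Matrix.of_apply,
    Matrix.one_apply_ne hij] at h
  linarith

theorem transpose (hM : IsGTM M) : IsGTM M.transpose :=
  ⟨fun i j => hM.1 j i, by rw [Matrix.transpose_transpose, add_comm, hM.2]⟩

theorem isClan_iff (hM : IsGTM M) {X : Set (Fin n)} :
    IsClan M X ↔ ∀ i ∈ X, ∀ j ∈ X, ∀ k ∉ X, M i k = M j k := by
  refine ⟨fun h i hi j hj k hk => (h i hi j hj k hk).1,
    fun h i hi j hj k hk => ⟨h i hi j hj k hk, ?_⟩⟩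
  have hik : i ≠ k := fun e => hk (e ▸ hi)
  have hjk : j ≠ k := fun e => hk (e ▸ hj)
  rw [hM.apply_swap hik, hM.apply_swap hjk, h i hi j hj k hk]

end IsGTM

theorem SameMinors.transpose_right {n : ℕ} {A B : Matrix (Fin n) (Fin n) ℝ} {P : ℕ → Prop}
    (h : SameMinors A B P) : SameMinors A B.transpose P := fun S hS => by
  rw [h S hS, ← Matrix.det_transpose, Matrix.transpose_submatrix]

theorem dAdj_eq_eAdj_transpose {n : ℕ} {A B : Matrix (Fin n) (Fin n) ℝ} (hB : IsGTM B) :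
    DAdj A B = EAdj A B.transpose := by
  ext i j
  refine and_congr_right fun hij => ?_
  rw [Matrix.transpose_apply, hB.apply_swap hij]

section SameMinors

variable {n : ℕ} {A B : Matrix (Fin n) (Fin n) ℝ}

theorem SameMinors.apply_mul_apply_eq (hA : IsGTM A) (hB : IsGTM B)
    (hmin : SameMinors A B (fun k => k = 2 ∨ k = 3)) {i j : Fin n} (hij : i ≠ j) :
    A i j * A j i = B i j * B j i := by
  have h := hmin {i, j} (Or.inl (Finset.card_pair hij))
  rw [A.det_submatrix_pair hij, B.det_submatrix_pair hij, Matrix.det_fin_two,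
    Matrix.det_fin_two] at h
  simp only [Matrix.submatrix_apply, Matrix.cons_val_zero, Matrix.cons_val_one,
    hA.apply_self, hB.apply_self] at h
  linarith

theorem SameMinors.cycle_eq (hA : IsGTM A) (hB : IsGTM B)
    (hmin : SameMinors A B (fun k => k = 2 ∨ k = 3)) {i j k : Fin n}
    (hij : i ≠ j) (hik : i ≠ k) (hjk : j ≠ k) :
    A i j * A j k * A k i + A i k * A k j * A j i =
      B i j * B j k * B k i + B i k * B k j * B j i := by
  have hcard : ({i, j, k} : Finset (Fin n)).card = 3 := by
    rw [Finset.card_insert_of_notMem (by simp [hij, hik]), Finset.card_pair hjk]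
  have h := hmin {i, j, k} (Or.inr hcard)
  rw [A.det_submatrix_triple hij hik hjk, B.det_submatrix_triple hij hik hjk,
    Matrix.det_fin_three, Matrix.det_fin_three] at h
  simp only [Matrix.submatrix_apply, Matrix.cons_val_zero, Matrix.cons_val_one, Matrix.cons_val,
    hA.apply_self, hB.apply_self] at h
  linear_combination h

theorem SameMinors.eq_or_eq_one_sub (hA : IsGTM A) (hB : IsGTM B)
    (hmin : SameMinors A B (fun k => k = 2 ∨ k = 3)) {i j : Fin n} (hij : i ≠ j) :
    A i j = B i j ∨ A i j = 1 - B i j := by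
  have h := hmin.apply_mul_apply_eq hA hB hij
  rw [hA.apply_swap hij, hB.apply_swap hij] at h
  have : (A i j - B i j) * (A i j - (1 - B i j)) = 0 := by linear_combination -h
  exact (mul_eq_zero.1 this).imp sub_eq_zero.1 sub_eq_zero.1

theorem SameMinors.eq_one_sub_of_not_eAdj (hA : IsGTM A) (hB : IsGTM B)
    (hmin : SameMinors A B (fun k => k = 2 ∨ k = 3)) {i j : Fin n} (hij : i ≠ j)
    (h : ¬ EAdj A B i j) : B i j = 1 - A i j := by
  rcases hmin.eq_or_eq_one_sub hA hB hij with hAB | hAB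
  · have : A i j = 1 / 2 := by_contra fun hne => h ⟨hij, hAB, hne⟩
    linarith
  · linarith

theorem SameMinors.apply_eq_of_eAdj (hA : IsGTM A) (hB : IsGTM B)
    (hmin : SameMinors A B (fun k => k = 2 ∨ k = 3)) {i j k : Fin n} (hij : EAdj A B i j)
    (hik : i ≠ k) (hjk : j ≠ k) (hBik : B i k = 1 - A i k) (hBjk : B j k = 1 - A j k) :
    A i k = A j k := by
  obtain ⟨hij, hABij, hhalf⟩ := hij
  have h := hmin.cycle_eq hA hB hij hik hjk
  rw [hA.apply_swap hij, hA.apply_swap hik, hA.apply_swap hjk, hB.apply_swap hij,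
    hB.apply_swap hik, hB.apply_swap hjk, hBik, hBjk, ← hABij] at h
  have : (1 - 2 * A i j) * (A i k - A j k) = 0 := by linear_combination h
  refine sub_eq_zero.1 ((mul_eq_zero.1 this).resolve_left fun h0 => hhalf ?_)
  linarith

theorem SameMinors.eq_one_sub_of_reflTransGen_eAdj (hA : IsGTM A) (hB : IsGTM B)
    (hmin : SameMinors A B (fun k => k = 2 ∨ k = 3)) {v w k : Fin n}
    (hw : ReflTransGen (EAdj A B) v w) (hk : ¬ ReflTransGen (EAdj A B) v k) :
    B w k = 1 - A w k :=
  hmin.eq_one_sub_of_not_eAdj hA hB (fun e => hk (e ▸ hw)) fun h => hk (hw.tail h)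

theorem SameMinors.apply_eq_of_reflTransGen_eAdj (hA : IsGTM A) (hB : IsGTM B)
    (hmin : SameMinors A B (fun k => k = 2 ∨ k = 3)) {v w k : Fin n}
    (hw : ReflTransGen (EAdj A B) v w) (hk : ¬ ReflTransGen (EAdj A B) v k) :
    A w k = A v k := by
  induction hw with
  | refl => rfl
  | @tail u w hu huw ih =>
    have hw : ReflTransGen (EAdj A B) v w := hu.tail huw
    rw [← ih, hmin.apply_eq_of_eAdj hA hB huw (fun e : u = k => hk (e ▸ hu))
      (fun e : w = k => hk (e ▸ hw))
      (hmin.eq_one_sub_of_reflTransGen_eAdj hA hB hu hk)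
      (hmin.eq_one_sub_of_reflTransGen_eAdj hA hB hw hk)]

theorem SameMinors.isClan_eComponent (hA : IsGTM A) (hB : IsGTM B)
    (hmin : SameMinors A B (fun k => k = 2 ∨ k = 3)) (v : Fin n) :
    IsClan A {w | ReflTransGen (EAdj A B) v w} ∧ IsClan B {w | ReflTransGen (EAdj A B) v w} := by
  have hconst {i k : Fin n} (hi : ReflTransGen (EAdj A B) v i)
      (hk : ¬ ReflTransGen (EAdj A B) v k) : A i k = A v k :=
    hmin.apply_eq_of_reflTransGen_eAdj hA hB hi hk
  refine ⟨hA.isClan_iff.2 fun i hi j hj k hk => ?_, hB.isClan_iff.2 fun i hi j hj k hk => ?_⟩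
  · rw [hconst hi hk, hconst hj hk]
  · rw [hmin.eq_one_sub_of_reflTransGen_eAdj hA hB hi hk,
      hmin.eq_one_sub_of_reflTransGen_eAdj hA hB hj hk, hconst hi hk, hconst hj hk]

end SameMinors

theorem stmt10 {n : ℕ} (A B : Matrix (Fin n) (Fin n) ℝ)
    (hA : IsGTM A) (hB : IsGTM B)
    (hmin : SameMinors A B (fun k => k = 2 ∨ k = 3)) (v : Fin n) :
    (IsClan A {w | Relation.ReflTransGen (EAdj A B) v w} ∧
      IsClan B {w | Relation.ReflTransGen (EAdj A B) v w}) ∧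
    (IsClan A {w | Relation.ReflTransGen (DAdj A B) v w} ∧
      IsClan B {w | Relation.ReflTransGen (DAdj A B) v w}) := by
  refine ⟨hmin.isClan_eComponent hA hB v, ?_⟩
  rw [dAdj_eq_eAdj_transpose hB, ← isClan_transpose_iff (M := B)]
  exact hmin.transpose_right.isClan_eComponent hA hB.transpose v
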